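/- arXiv:2010.10165 — 4 statements merged into one kernel-verified Lean document; each statement's English description precedes it below -/
import Mathlib

section
/- Let T : X → Y be a continuous linear map between Banach spaces that admits a generalized-inverse block factorization: there exist Banach spaces Z⁺, Z⁻ and continuous linear maps T⁺, T⁻, S, S⁻, S⁺ such that the block matrix (T, T⁺; T⁻, 0) : X × Z⁺ → Y × Z⁻ is invertible with inverse (S, S⁻; S⁺, 0). Then the kernel of T is a closed complemented subspace of X and the image of T is a closed complemented subspace of Y; in fact T ∘ S and S ∘ T are continuous idempotents with range(T ∘ S) = range T and kernel(S ∘ T) = kernel T. -/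
/-!
Evaluating the two block identities at `(x, 0)` and `(T x, 0)` gives `S⁺ T = 0` and
`T S + T⁺ S⁺ = 1`, hence `T S T = T`: `S` is an inner (generalized) inverse of `T`. For any inner
inverse, `T S` is a continuous projection onto `range T` and `S T` a continuous projection with
kernel `ker T`; the range and kernel of a continuous projection are topological complements.
-/

open ContinuousLinearMap

namespace ContinuousLinearMap

section InnerInverse

variable {R : Type*} [Ring R]
  {M : Type*} [TopologicalSpace M] [AddCommGroup M] [Module R M]
  {N : Type*} [TopologicalSpace N] [AddCommGroup N] [Module R N]

def IsInnerInverse (T : M →L[R] N) (S : N →L[R] M) : Prop :=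
  T ∘L S ∘L T = T

variable {T : M →L[R] N} {S : N →L[R] M}

namespace IsInnerInverse

theorem apply_apply_apply (h : IsInnerInverse T S) (x : M) : T (S (T x)) = T x :=
  DFunLike.congr_fun h x

theorem isIdempotentElem_comp (h : IsInnerInverse T S) : IsIdempotentElem (T ∘L S) := by
  ext y
  exact h.apply_apply_apply (S y)

theorem isIdempotentElem_comp_rev (h : IsInnerInverse T S) : IsIdempotentElem (S ∘L T) := by
  ext x
  exact congrArg S (h.apply_apply_apply x)

theorem range_comp (h : IsInnerInverse T S) :
    LinearMap.range ((T ∘L S : N →L[R] N) : N →ₗ[R] N) = LinearMap.range (T : M →ₗ[R] N) := by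
  refine le_antisymm ?_ ?_
  · rintro _ ⟨y, rfl⟩
    exact ⟨S y, rfl⟩
  · rintro _ ⟨x, rfl⟩
    exact ⟨T x, h.apply_apply_apply x⟩

theorem ker_comp_rev (h : IsInnerInverse T S) :
    LinearMap.ker ((S ∘L T : M →L[R] M) : M →ₗ[R] M) = LinearMap.ker (T : M →ₗ[R] N) := by
  refine le_antisymm (fun x hx => ?_) (fun x hx => ?_)
  · have hSTx : S (T x) = 0 := hx
    change T x = 0
    rw [← h.apply_apply_apply x, hSTx, map_zero]
  · change S (T x) = 0
    rw [show T x = 0 from hx, map_zero]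

theorem closedComplemented_range (h : IsInnerInverse T S) :
    (LinearMap.range (T : M →ₗ[R] N)).ClosedComplemented :=
  h.range_comp ▸ h.isIdempotentElem_comp.isTopCompl.closedComplemented

theorem closedComplemented_ker [ContinuousSub M] (h : IsInnerInverse T S) :
    (LinearMap.ker (T : M →ₗ[R] N)).ClosedComplemented :=
  h.ker_comp_rev ▸ h.isIdempotentElem_comp_rev.isTopCompl.symm.closedComplemented

end IsInnerInverse

theorem isInnerInverse_of_block_inverse
    {Zp Zm : Type*} [TopologicalSpace Zp] [AddCommGroup Zp] [Module R Zp]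
    [TopologicalSpace Zm] [AddCommGroup Zm] [Module R Zm]
    {Tp : Zp →L[R] N} {Tm : M →L[R] Zm} {Sm : Zm →L[R] M} {Sp : N →L[R] Zp}
    (hinv₁ : ∀ p : M × Zp, (S (T p.1 + Tp p.2) + Sm (Tm p.1), Sp (T p.1 + Tp p.2)) = p)
    (hinv₂ : ∀ q : N × Zm, (T (S q.1 + Sm q.2) + Tp (Sp q.1), Tm (S q.1 + Sm q.2)) = q) :
    IsInnerInverse T S := by
  ext x
  have hSpT : Sp (T x) = 0 := by simpa using congrArg Prod.snd (hinv₁ (x, 0))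
  have hTS : T (S (T x)) + Tp (Sp (T x)) = T x := by
    simpa using congrArg Prod.fst (hinv₂ (T x, 0))
  simpa [hSpT] using hTS

end InnerInverse

end ContinuousLinearMap

theorem regular_of_block_factorization_general
    {X Y Zp Zm : Type*}
    [NormedAddCommGroup X] [NormedSpace ℝ X]
    [NormedAddCommGroup Y] [NormedSpace ℝ Y]
    [NormedAddCommGroup Zp] [NormedSpace ℝ Zp]
    [NormedAddCommGroup Zm] [NormedSpace ℝ Zm]
    (T : X →L[ℝ] Y) (Tp : Zp →L[ℝ] Y) (Tm : X →L[ℝ] Zm)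
    (S : Y →L[ℝ] X) (Sm : Zm →L[ℝ] X) (Sp : Y →L[ℝ] Zp)
    (hinv₁ : ∀ p : X × Zp,
      (S (T p.1 + Tp p.2) + Sm (Tm p.1), Sp (T p.1 + Tp p.2)) = p)
    (hinv₂ : ∀ q : Y × Zm,
      (T (S q.1 + Sm q.2) + Tp (Sp q.1), Tm (S q.1 + Sm q.2)) = q) :
    IsClosed (LinearMap.ker (T : X →ₗ[ℝ] Y) : Set X) ∧
    (LinearMap.ker (T : X →ₗ[ℝ] Y)).ClosedComplemented ∧
    IsClosed (LinearMap.range (T : X →ₗ[ℝ] Y) : Set Y) ∧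
    (LinearMap.range (T : X →ₗ[ℝ] Y)).ClosedComplemented ∧
    (T ∘L S) ∘L (T ∘L S) = T ∘L S ∧
    (S ∘L T) ∘L (S ∘L T) = S ∘L T ∧
    LinearMap.range ((T ∘L S : Y →L[ℝ] Y) : Y →ₗ[ℝ] Y) = LinearMap.range (T : X →ₗ[ℝ] Y) ∧
    LinearMap.ker ((S ∘L T : X →L[ℝ] X) : X →ₗ[ℝ] X) = LinearMap.ker (T : X →ₗ[ℝ] Y) := by
  have h : IsInnerInverse T S := isInnerInverse_of_block_inverse hinv₁ hinv₂
  exact ⟨h.closedComplemented_ker.isClosed, h.closedComplemented_ker,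
    h.closedComplemented_range.isClosed, h.closedComplemented_range,
    h.isIdempotentElem_comp, h.isIdempotentElem_comp_rev, h.range_comp, h.ker_comp_rev⟩

/-- **Regularity from a generalized-inverse block factorization.**
If the block operator `(T, T⁺; T⁻, 0) : X × Z⁺ → Y × Z⁻` between Banach spaces is invertible
with inverse of block form `(S, S⁻; S⁺, 0)`, then the kernel of `T` is a closed complemented
subspace of `X` and the image of `T` is a closed complemented subspace of `Y`; in fact
`T ∘ S` and `S ∘ T` are continuous idempotents with `range (T ∘ S) = range T` and
`ker (S ∘ T) = ker T`. -/
theorem regular_of_block_factorization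
    {X Y Zp Zm : Type*}
    [NormedAddCommGroup X] [NormedSpace ℝ X] [CompleteSpace X]
    [NormedAddCommGroup Y] [NormedSpace ℝ Y] [CompleteSpace Y]
    [NormedAddCommGroup Zp] [NormedSpace ℝ Zp] [CompleteSpace Zp]
    [NormedAddCommGroup Zm] [NormedSpace ℝ Zm] [CompleteSpace Zm]
    (T : X →L[ℝ] Y) (Tp : Zp →L[ℝ] Y) (Tm : X →L[ℝ] Zm)
    (S : Y →L[ℝ] X) (Sm : Zm →L[ℝ] X) (Sp : Y →L[ℝ] Zp)
    (hinv₁ : ∀ p : X × Zp,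
      (S (T p.1 + Tp p.2) + Sm (Tm p.1), Sp (T p.1 + Tp p.2)) = p)
    (hinv₂ : ∀ q : Y × Zm,
      (T (S q.1 + Sm q.2) + Tp (Sp q.1), Tm (S q.1 + Sm q.2)) = q) :
    IsClosed (LinearMap.ker (T : X →ₗ[ℝ] Y) : Set X) ∧
    (LinearMap.ker (T : X →ₗ[ℝ] Y)).ClosedComplemented ∧
    IsClosed (LinearMap.range (T : X →ₗ[ℝ] Y) : Set Y) ∧
    (LinearMap.range (T : X →ₗ[ℝ] Y)).ClosedComplemented ∧
    (T ∘L S) ∘L (T ∘L S) = T ∘L S ∧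
    (S ∘L T) ∘L (S ∘L T) = S ∘L T ∧
    LinearMap.range ((T ∘L S : Y →L[ℝ] Y) : Y →ₗ[ℝ] Y) = LinearMap.range (T : X →ₗ[ℝ] Y) ∧
    LinearMap.ker ((S ∘L T : X →L[ℝ] X) : X →ₗ[ℝ] X) = LinearMap.ker (T : X →ₗ[ℝ] Y) :=
  regular_of_block_factorization_general T Tp Tm S Sm Sp hinv₁ hinv₂
end

section
/- Let T : P × X → Y be a family of continuous linear maps between Banach spaces, continuous in the parameter p, with T₀ a Fredholm operator. Suppose T is uniformly regular at 0, i.e., there are decompositions X = ker T₀ ⊕ coim T₀, Y = coker T₀ ⊕ im T₀ such that T̃ₚ = pr_{im T₀} ∘ Tₚ|_{coim T₀} is a topological isomorphism for every p ∈ P. Then Tₚ is Fredholm for every p ∈ P and ind Tₚ = ind T₀. -/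
/-!
Let `π` be the projection onto `im T₀` along `Q`. Since `π ∘ Tₚ` maps `C` isomorphically onto
`im T₀`, the image `Tₚ(C)` is again a complement of `Q`, and it is closed: it is the fixed-point
set of the continuous projection `Tₚ ∘ (π ∘ Tₚ|_C)⁻¹ ∘ π`. So `im Tₚ` contains a closed subspace
of finite codimension and is closed. As `Tₚ` is injective on `C`, its kernel and cokernel are
those of the induced map `X/C → Y/Tₚ(C)` between spaces of dimensions `dim ker T₀` and
`dim Q = dim coker T₀`, and rank–nullity gives `ind Tₚ = ind T₀`.
-/

/-- A continuous linear map is Fredholm if it has finite-dimensional kernel and closed,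
finite-codimensional range. -/
def IsFredholmOperator {X Y : Type*}
    [NormedAddCommGroup X] [NormedSpace ℝ X]
    [NormedAddCommGroup Y] [NormedSpace ℝ Y]
    (T : X →L[ℝ] Y) : Prop :=
  FiniteDimensional ℝ (LinearMap.ker (T : X →ₗ[ℝ] Y)) ∧
  IsClosed (LinearMap.range (T : X →ₗ[ℝ] Y) : Set Y) ∧
  FiniteDimensional ℝ (Y ⧸ LinearMap.range (T : X →ₗ[ℝ] Y))

/-- The index of a (Fredholm) operator: `dim ker T - dim coker T`. -/
noncomputable def fredholmIndex {X Y : Type*}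
    [NormedAddCommGroup X] [NormedSpace ℝ X]
    [NormedAddCommGroup Y] [NormedSpace ℝ Y]
    (T : X →L[ℝ] Y) : ℤ :=
  (Module.finrank ℝ (LinearMap.ker (T : X →ₗ[ℝ] Y)) : ℤ) -
    (Module.finrank ℝ (Y ⧸ LinearMap.range (T : X →ₗ[ℝ] Y)) : ℤ)

open Module Submodule LinearMap Function

namespace LinearMap

section Ring

variable {𝕜 M N : Type*} [Ring 𝕜] [AddCommGroup M] [Module 𝕜 M] [AddCommGroup N] [Module 𝕜 N]
  (f : M →ₗ[𝕜] N) {C : Submodule 𝕜 M}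

noncomputable def kerEquivKerMapQ (hC : Disjoint C (ker f)) :
    ker f ≃ₗ[𝕜] ker (C.mapQ _ f (C.le_comap_map f)) :=
  (LinearEquiv.ofInjective (C.mkQ ∘ₗ (ker f).subtype) (by
      rw [← ker_eq_bot, ker_comp, ker_mkQ, ← disjoint_iff_comap_eq_bot]
      exact hC.symm)).trans
    (LinearEquiv.ofEq _ _ (by
      rw [ker_mapQ, comap_map_eq, Submodule.map_sup, mkQ_map_self, bot_sup_eq, range_comp,
        range_subtype]))

noncomputable def quotientRangeEquivQuotientRangeMapQ (C : Submodule 𝕜 M) :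
    (N ⧸ range f) ≃ₗ[𝕜] (N ⧸ C.map f) ⧸ range (C.mapQ _ f (C.le_comap_map f)) :=
  (quotientQuotientEquivQuotient _ _ map_le_range).symm.trans
    (quotEquivOfEq _ _ (range_mapQ C _ f _).symm)

theorem index_eq_index_mapQ (hC : Disjoint C (ker f)) :
    f.index = (C.mapQ _ f (C.le_comap_map f)).index := by
  rw [index_eq_finrank_sub, index_eq_finrank_sub, (f.kerEquivKerMapQ hC).finrank_eq,
    (f.quotientRangeEquivQuotientRangeMapQ C).finrank_eq]

theorem isCompl_map_of_bijective_projectionOnto_comp {R Q : Submodule 𝕜 N} (hRQ : IsCompl R Q)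
    (h : Bijective (R.projectionOnto Q hRQ ∘ₗ f ∘ₗ C.subtype)) : IsCompl (C.map f) Q := by
  refine ⟨?_, ?_⟩
  · rw [disjoint_def]
    rintro _ ⟨c, hc, rfl⟩ hQ
    have : (⟨c, hc⟩ : C) = 0 := h.injective <| by
      simpa [projectionOnto_apply_eq_zero_iff] using hQ
    simp [show c = 0 from congrArg Subtype.val this]
  · rw [codisjoint_iff_le_sup]
    intro y _
    obtain ⟨c, hc⟩ := h.surjective (R.projectionOnto Q hRQ y)
    have hyQ : y - f c ∈ Q := by
      rw [← projectionOnto_apply_eq_zero_iff hRQ, map_sub, ← hc]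
      exact sub_self _
    simpa using Submodule.add_mem_sup (mem_map_of_mem (f := f) c.2) hyQ

theorem disjoint_ker_of_injective_comp_subtype {P : Type*} [AddCommGroup P] [Module 𝕜 P]
    (g : N →ₗ[𝕜] P) (h : Injective (g ∘ₗ f ∘ₗ C.subtype)) : Disjoint C (ker f) := by
  rw [← injective_domRestrict_iff]
  exact Injective.of_comp (f := g) h

end Ring

section DivisionRing

variable {𝕜 M N : Type*} [DivisionRing 𝕜] [AddCommGroup M] [Module 𝕜 M] [AddCommGroup N]
  [Module 𝕜 N] (f : M →ₗ[𝕜] N) {C : Submodule 𝕜 M}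

theorem finiteDimensional_ker_of_disjoint [FiniteDimensional 𝕜 (M ⧸ C)]
    (hC : Disjoint C (ker f)) : FiniteDimensional 𝕜 (ker f) :=
  (f.kerEquivKerMapQ hC).symm.finiteDimensional

theorem finiteDimensional_quotient_range (C : Submodule 𝕜 M)
    [FiniteDimensional 𝕜 (N ⧸ C.map f)] : FiniteDimensional 𝕜 (N ⧸ range f) :=
  (f.quotientRangeEquivQuotientRangeMapQ C).symm.finiteDimensional

theorem index_eq_of_disjoint_ker [FiniteDimensional 𝕜 (M ⧸ C)]
    [FiniteDimensional 𝕜 (N ⧸ C.map f)] (hC : Disjoint C (ker f)) :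
    f.index = finrank 𝕜 (M ⧸ C) - finrank 𝕜 (N ⧸ C.map f) := by
  rw [f.index_eq_index_mapQ hC, index_eq_of_finiteDimensional]

end DivisionRing

end LinearMap

theorem ContinuousLinearMap.isClosed_map_of_projectionOnto_comp_eq {𝕜 X Y : Type*}
    [NontriviallyNormedField 𝕜] [NormedAddCommGroup X] [NormedSpace 𝕜 X]
    [NormedAddCommGroup Y] [NormedSpace 𝕜 Y] (T : X →L[𝕜] Y) {C : Submodule 𝕜 X}
    {R Q : Submodule 𝕜 Y} (hRQ : IsTopCompl R Q) (e : C ≃L[𝕜] R)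
    (he : ∀ c : C, (e c : Y) = R.projectionOnto Q hRQ.isCompl (T c)) :
    IsClosed (C.map (T : X →ₗ[𝕜] Y) : Set Y) := by
  let Ψ : Y →L[𝕜] Y := T ∘L C.subtypeL ∘L e.symm ∘L R.projectionOntoL Q hRQ
  have hΨ : ∀ c : C, Ψ (T c) = T c := fun c => by
    have : R.projectionOntoL Q hRQ (T c) = e c := Subtype.ext (he c).symm
    simp [Ψ, this]
  suffices (C.map (T : X →ₗ[𝕜] Y) : Set Y) = {y | Ψ y = y} from
    this ▸ isClosed_eq Ψ.continuous continuous_id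
  ext y
  constructor
  · rintro ⟨c, hc, rfl⟩
    exact hΨ ⟨c, hc⟩
  · intro hy
    exact ⟨_, (e.symm _).2, hy⟩

section Real

variable {X Y : Type*} [NormedAddCommGroup X] [NormedSpace ℝ X]
  [NormedAddCommGroup Y] [NormedSpace ℝ Y]

theorem isFredholmOperator_of_disjoint_ker (T : X →L[ℝ] Y) {C : Submodule ℝ X}
    (hC : Disjoint C (ker (T : X →ₗ[ℝ] Y))) [FiniteDimensional ℝ (X ⧸ C)]
    (hTC : IsClosed (C.map (T : X →ₗ[ℝ] Y) : Set Y))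
    [FiniteDimensional ℝ (Y ⧸ C.map (T : X →ₗ[ℝ] Y))] : IsFredholmOperator T :=
  ⟨(T : X →ₗ[ℝ] Y).finiteDimensional_ker_of_disjoint hC,
    isClosed_mono_of_finiteDimensional_quotient hTC map_le_range,
    (T : X →ₗ[ℝ] Y).finiteDimensional_quotient_range C⟩

theorem isFredholmOperator_and_fredholmIndex_eq_of_projectionOnto_comp_eq (T : X →L[ℝ] Y)
    {K C : Submodule ℝ X} {R Q : Submodule ℝ Y} [FiniteDimensional ℝ K]
    (hR : IsClosed (R : Set Y)) [FiniteDimensional ℝ (Y ⧸ R)] (hKC : IsCompl K C)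
    (hRQ : IsCompl R Q) (e : C ≃L[ℝ] R)
    (he : ∀ c : C, (e c : Y) = R.projectionOnto Q hRQ (T c)) :
    IsFredholmOperator T ∧ fredholmIndex T = finrank ℝ K - finrank ℝ (Y ⧸ R) := by
  have hbij : Bijective (R.projectionOnto Q hRQ ∘ₗ (T : X →ₗ[ℝ] Y) ∘ₗ C.subtype) := by
    convert e.bijective using 1
    ext c
    exact (he c).symm
  have hTC := (T : X →ₗ[ℝ] Y).isCompl_map_of_bijective_projectionOnto_comp hRQ hbij
  have hdisj := (T : X →ₗ[ℝ] Y).disjoint_ker_of_injective_comp_subtype _ hbij.injective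
  have hquotC := quotientEquivOfIsCompl C K hKC.symm
  have hquotR := quotientEquivOfIsCompl R Q hRQ
  have hquotTC := quotientEquivOfIsCompl _ Q hTC
  have : FiniteDimensional ℝ (X ⧸ C) := hquotC.symm.finiteDimensional
  have : FiniteDimensional ℝ Q := hquotR.finiteDimensional
  have : FiniteDimensional ℝ (Y ⧸ C.map (T : X →ₗ[ℝ] Y)) := hquotTC.symm.finiteDimensional
  have hclosed := T.isClosed_map_of_projectionOnto_comp_eq
    (Submodule.IsCompl.isTopCompl_of_finiteDimensional_quotient hRQ hR) e he
  refine ⟨isFredholmOperator_of_disjoint_ker T hdisj hclosed, ?_⟩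
  rw [fredholmIndex, ← index_eq_finrank_sub, (T : X →ₗ[ℝ] Y).index_eq_of_disjoint_ker hdisj,
    hquotC.finrank_eq, hquotTC.finrank_eq, hquotR.finrank_eq]

end Real

theorem fredholm_and_index_constant_of_uniformly_regular_general
    {E X Y : Type*}
    [NormedAddCommGroup E]
    [NormedAddCommGroup X] [NormedSpace ℝ X]
    [NormedAddCommGroup Y] [NormedSpace ℝ Y]
    (P : Set E)
    (T : E → (X →L[ℝ] Y))
    (hFred : IsFredholmOperator (T 0))
    (C : Submodule ℝ X) (Q : Submodule ℝ Y)
    (hC : IsCompl (LinearMap.ker (T 0 : X →ₗ[ℝ] Y)) C)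
    (hQ : IsCompl Q (LinearMap.range (T 0 : X →ₗ[ℝ] Y)))
    (hreg : ∀ p ∈ P, ∃ e : C ≃L[ℝ] LinearMap.range (T 0 : X →ₗ[ℝ] Y),
      ∀ c : C, (e c : Y) =
        ((Submodule.linearProjOfIsCompl (LinearMap.range (T 0 : X →ₗ[ℝ] Y)) Q hQ.symm) (T p (c : X)) : Y)) :
    ∀ p ∈ P, IsFredholmOperator (T p) ∧ fredholmIndex (T p) = fredholmIndex (T 0) := by
  intro p hp
  obtain ⟨e, he⟩ := hreg p hp
  obtain ⟨_, hR, _⟩ := hFred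
  exact isFredholmOperator_and_fredholmIndex_eq_of_projectionOnto_comp_eq (T p) hR hC hQ.symm e he

/-- **Stability of the Fredholm property and the index along uniformly regular families.**
Let `T : P × X → Y` be a continuous family of continuous linear maps between Banach spaces
with `T₀` Fredholm, uniformly regular at `0` with respect to decompositions
`X = ker T₀ ⊕ C` and `Y = Q ⊕ im T₀`. Then `Tₚ` is Fredholm and `ind Tₚ = ind T₀` for all
`p ∈ P`. -/
theorem fredholm_and_index_constant_of_uniformly_regular
    {E X Y : Type*}
    [NormedAddCommGroup E] [NormedSpace ℝ E]
    [NormedAddCommGroup X] [NormedSpace ℝ X] [CompleteSpace X]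
    [NormedAddCommGroup Y] [NormedSpace ℝ Y] [CompleteSpace Y]
    (P : Set E) (hP : P ∈ nhds (0 : E))
    (T : E → (X →L[ℝ] Y))
    (hcont : Continuous fun px : E × X => T px.1 px.2)
    (hFred : IsFredholmOperator (T 0))
    (C : Submodule ℝ X) (Q : Submodule ℝ Y)
    (hC : IsCompl (LinearMap.ker (T 0 : X →ₗ[ℝ] Y)) C)
    (hQ : IsCompl Q (LinearMap.range (T 0 : X →ₗ[ℝ] Y)))
    (hreg : ∀ p ∈ P, ∃ e : C ≃L[ℝ] LinearMap.range (T 0 : X →ₗ[ℝ] Y),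
      ∀ c : C, (e c : Y) =
        ((Submodule.linearProjOfIsCompl (LinearMap.range (T 0 : X →ₗ[ℝ] Y)) Q hQ.symm) (T p (c : X)) : Y)) :
    ∀ p ∈ P, IsFredholmOperator (T p) ∧ fredholmIndex (T p) = fredholmIndex (T 0) :=
  fredholm_and_index_constant_of_uniformly_regular_general P T hFred C Q hC hQ hreg
end

section
/- Let X, Y be Banach spaces with topological decompositions X = K ⊕ C and Y = Q ⊕ I, let f̂ : C → I be a topological isomorphism and f_sing : U → Q smooth on an open 0-neighborhood U ⊆ X with f_sing(0,·)|_{U∩C} = 0 and D f_sing(0) = 0. Suppose a compact group H acts continuously and linearly on X and Y, preserving the decompositions, and that f̂ and f_sing are H-equivariant and U is H-invariant. Then the zero set {x ∈ U : f̂(pr_C x) + f_sing(x) = 0} is H-invariant and equals {(x₁, 0) : x₁ ∈ K ∩ U-slice, f_sing(x₁, 0) = 0}, which is invariant under the H-action on K; consequently the quotient of the zero level set by H is homeomorphic to {x₁ ∈ V : s(x₁) = 0}/H, where V = U ∩ K and s = f_sing(·, 0) : V → Q is H-equivariant. -/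
/-! Since `f̂` is injective, the `I`-component of `f` vanishes exactly on the slice `x₂ = 0`, so the
zero set lies in `K × {0}` and the projection to `K` identifies it homeomorphically with
`{s = 0}`. On the slice the `C`-part of the `H`-action is trivial, so the two orbit relations
correspond and the homeomorphism descends to the quotients. -/

namespace Homeomorph

variable {X Y : Type*} [TopologicalSpace X] [TopologicalSpace Y]

def subtypeProdOfSndEq {p : X × Y → Prop} {q : X → Prop} {y₀ : Y}
    (hp : ∀ x, p x ↔ x.2 = y₀ ∧ q x.1) : {x // p x} ≃ₜ {x₁ // q x₁} where
  toFun x := ⟨x.1.1, ((hp x).1 x.2).2⟩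
  invFun x₁ := ⟨(x₁.1, y₀), (hp _).2 ⟨rfl, x₁.2⟩⟩
  left_inv x := Subtype.ext (Prod.ext rfl ((hp x).1 x.2).1.symm)
  right_inv _ := rfl
  continuous_toFun := by fun_prop
  continuous_invFun := by fun_prop

end Homeomorph

theorem normalForm_zero_iff {K C Q I : Type*} [Zero C] [Zero Q] [Zero I] {U : Set (K × C)}
    {f : K × C → Q} {g : C → I} (hg : ∀ y, g y = 0 ↔ y = 0) (x : K × C) :
    x ∈ U ∧ f x = 0 ∧ g x.2 = 0 ↔ x.2 = 0 ∧ (x.1, 0) ∈ U ∧ f (x.1, 0) = 0 := by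
  obtain ⟨x₁, x₂⟩ := x
  rw [hg]
  constructor
  · rintro ⟨hU, hf, rfl⟩
    exact ⟨rfl, hU, hf⟩
  · rintro ⟨rfl, hU, hf⟩
    exact ⟨hU, hf, rfl⟩

theorem equivariant_normal_form_zero_set_quotient_general
    {H K C Q I : Type*}
    [Group H]
    [NormedAddCommGroup K] [NormedSpace ℝ K]
    [NormedAddCommGroup C] [NormedSpace ℝ C]
    [NormedAddCommGroup Q] [NormedSpace ℝ Q]
    [NormedAddCommGroup I] [NormedSpace ℝ I]
    (ρK : H →* (K ≃L[ℝ] K)) (ρC : H →* (C ≃L[ℝ] C))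
    (ρQ : H →* (Q ≃L[ℝ] Q)) (ρI : H →* (I ≃L[ℝ] I))
    (fhat : C ≃L[ℝ] I)
    (hfhatEquiv : ∀ (h : H) (c : C), fhat (ρC h c) = ρI h (fhat c))
    (U : Set (K × C))
    (hUinv : ∀ h : H, ∀ x ∈ U, (ρK h x.1, ρC h x.2) ∈ U)
    (fsing : K × C → Q)
    (hEquiv : ∀ h : H, ∀ x ∈ U, fsing (ρK h x.1, ρC h x.2) = ρQ h (fsing x)) :
    (∀ h : H, ∀ x : K × C, (x ∈ U ∧ fsing x = 0 ∧ fhat x.2 = 0) →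
      ((ρK h x.1, ρC h x.2) ∈ U ∧ fsing (ρK h x.1, ρC h x.2) = 0 ∧
        fhat (ρC h x.2) = 0)) ∧
    ({x : K × C | x ∈ U ∧ fsing x = 0 ∧ fhat x.2 = 0} =
      {x : K × C | x ∈ U ∧ x.2 = 0 ∧ fsing (x.1, 0) = 0}) ∧
    (∀ h : H, ∀ x₁ : K, ((x₁, (0 : C)) ∈ U ∧ fsing (x₁, 0) = 0) →
      ((ρK h x₁, (0 : C)) ∈ U ∧ fsing (ρK h x₁, 0) = 0)) ∧
    Nonempty
      ((Quot (fun x y : {x : K × C // x ∈ U ∧ fsing x = 0 ∧ fhat x.2 = 0} =>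
          ∃ h : H, (y : K × C).1 = ρK h (x : K × C).1 ∧
            (y : K × C).2 = ρC h (x : K × C).2)) ≃ₜ
       (Quot (fun x y : {x₁ : K // (x₁, (0 : C)) ∈ U ∧ fsing (x₁, 0) = 0} =>
          ∃ h : H, (y : K) = ρK h (x : K)))) := by
  have hzero := normalForm_zero_iff (U := U) (f := fsing) fun _ => fhat.map_eq_zero_iff
  have hinv : ∀ h : H, ∀ x : K × C, (x ∈ U ∧ fsing x = 0 ∧ fhat x.2 = 0) →
      ((ρK h x.1, ρC h x.2) ∈ U ∧ fsing (ρK h x.1, ρC h x.2) = 0 ∧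
        fhat (ρC h x.2) = 0) := fun h x ⟨hU, hf, hfhat⟩ =>
    ⟨hUinv h x hU, by rw [hEquiv h x hU, hf, map_zero], by rw [hfhatEquiv, hfhat, map_zero]⟩
  refine ⟨hinv, ?_, fun h x₁ hx₁ => ?_, ?_⟩
  · ext ⟨x₁, x₂⟩
    simp only [Set.mem_ofPred_eq, hzero]
    constructor
    · rintro ⟨rfl, hU, hf⟩
      exact ⟨hU, rfl, hf⟩
    · rintro ⟨hU, rfl, hf⟩
      exact ⟨rfl, hU, hf⟩
  · simpa using ((hzero _).1 (hinv h (x₁, 0) ((hzero _).2 ⟨rfl, hx₁⟩))).2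
  · refine ⟨Homeomorph.Quot.congr (Homeomorph.subtypeProdOfSndEq hzero) fun x y => ?_⟩
    refine exists_congr fun h => and_iff_left ?_
    rw [((hzero _).1 x.2).1, ((hzero _).1 y.2).1, map_zero]

/-- **Equivariant normal form: zero set and Kuranishi quotient.**
Let `X = K ⊕ C`, `Y = Q ⊕ I` be decompositions of Banach spaces invariant under linear
continuous actions of a compact group `H`, let `f̂ : C → I` be an `H`-equivariant
topological isomorphism and `f_sing : U → Q` an `H`-equivariant smooth map on an
`H`-invariant open `0`-neighborhood `U` with `f_sing(0,·)|_{U∩C} = 0` and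
`D f_sing(0) = 0`. Then the zero set of `f = f̂ ∘ pr_C + f_sing` is `H`-invariant, equals
`{(x₁, 0) : f_sing(x₁,0) = 0}` (which is invariant under the `H`-action on `K`), and its
quotient by `H` is homeomorphic to `{x₁ ∈ V : s(x₁) = 0}/H` with `V = U ∩ K` and
`s = f_sing(·, 0)`. -/
theorem equivariant_normal_form_zero_set_quotient
    {H K C Q I : Type*}
    [Group H] [TopologicalSpace H] [CompactSpace H] [IsTopologicalGroup H]
    [NormedAddCommGroup K] [NormedSpace ℝ K] [CompleteSpace K]
    [NormedAddCommGroup C] [NormedSpace ℝ C] [CompleteSpace C]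
    [NormedAddCommGroup Q] [NormedSpace ℝ Q] [CompleteSpace Q]
    [NormedAddCommGroup I] [NormedSpace ℝ I] [CompleteSpace I]
    (ρK : H →* (K ≃L[ℝ] K)) (ρC : H →* (C ≃L[ℝ] C))
    (ρQ : H →* (Q ≃L[ℝ] Q)) (ρI : H →* (I ≃L[ℝ] I))
    (hcK : Continuous fun p : H × K => ρK p.1 p.2)
    (hcC : Continuous fun p : H × C => ρC p.1 p.2)
    (hcQ : Continuous fun p : H × Q => ρQ p.1 p.2)
    (hcI : Continuous fun p : H × I => ρI p.1 p.2)
    (fhat : C ≃L[ℝ] I)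
    (hfhatEquiv : ∀ (h : H) (c : C), fhat (ρC h c) = ρI h (fhat c))
    (U : Set (K × C)) (hUopen : IsOpen U) (h0U : (0 : K × C) ∈ U)
    (hUinv : ∀ h : H, ∀ x ∈ U, (ρK h x.1, ρC h x.2) ∈ U)
    (fsing : K × C → Q)
    (hsmooth : ContDiffOn ℝ (⊤ : ℕ∞) fsing U)
    (hvanish : ∀ x₂ : C, ((0 : K), x₂) ∈ U → fsing (0, x₂) = 0)
    (hderiv0 : fderiv ℝ fsing 0 = 0)
    (hEquiv : ∀ h : H, ∀ x ∈ U, fsing (ρK h x.1, ρC h x.2) = ρQ h (fsing x)) :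
    (∀ h : H, ∀ x : K × C, (x ∈ U ∧ fsing x = 0 ∧ fhat x.2 = 0) →
      ((ρK h x.1, ρC h x.2) ∈ U ∧ fsing (ρK h x.1, ρC h x.2) = 0 ∧
        fhat (ρC h x.2) = 0)) ∧
    ({x : K × C | x ∈ U ∧ fsing x = 0 ∧ fhat x.2 = 0} =
      {x : K × C | x ∈ U ∧ x.2 = 0 ∧ fsing (x.1, 0) = 0}) ∧
    (∀ h : H, ∀ x₁ : K, ((x₁, (0 : C)) ∈ U ∧ fsing (x₁, 0) = 0) →
      ((ρK h x₁, (0 : C)) ∈ U ∧ fsing (ρK h x₁, 0) = 0)) ∧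
    Nonempty
      ((Quot (fun x y : {x : K × C // x ∈ U ∧ fsing x = 0 ∧ fhat x.2 = 0} =>
          ∃ h : H, (y : K × C).1 = ρK h (x : K × C).1 ∧
            (y : K × C).2 = ρC h (x : K × C).2)) ≃ₜ
       (Quot (fun x y : {x₁ : K // (x₁, (0 : C)) ∈ U ∧ fsing (x₁, 0) = 0} =>
          ∃ h : H, (y : K) = ρK h (x : K)))) :=
  equivariant_normal_form_zero_set_quotient_general ρK ρC ρQ ρI fhat hfhatEquiv U hUinv fsing hEquiv
end

section
/- Let X, Y be Banach spaces and let Φ : X ⊕ Z⁺ → Y ⊕ Z⁻ be an invertible continuous linear block operator of the form Φ(x, z⁺) = (T x + T⁺ z⁺, T⁻ x), where Z⁺ and Z⁻ are finite-dimensional. Then T : X → Y is a Fredholm operator, and ind T = dim Z⁻ − dim Z⁺. -/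
/-!
The first component of `Φ` is `S = T.coprod T⁺ : X × Z⁺ → Y`, so `S` is onto and `Φ` maps
`ker S` isomorphically onto `0 × Z⁻`. The projection of `ker S` to `Z⁺` has kernel `ker T × 0`
and image `W = T⁺⁻¹(range T)`, and as `S` is onto, `T⁺` induces `Z⁺ ⧸ W ≃ Y ⧸ range T`. Hence
`dim ker T + dim W = dim Z⁻` and `dim coker T + dim W = dim Z⁺`. Finally `S⁻¹(range T) = X × W`
is closed and `S` is a quotient map by the open mapping theorem, so `range T` is closed.
-/

open LinearMap Module Function

namespace Submodule

variable {K M N : Type*} [DivisionRing K] [AddCommGroup M] [Module K M] [AddCommGroup N]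
  [Module K N]

theorem finrank_map_add_finrank_inf_ker (f : M →ₗ[K] N) (p : Submodule K M)
    [FiniteDimensional K p] :
    finrank K (p.map f) + finrank K ↥(p ⊓ ker f) = finrank K p := by
  rw [← finrank_range_add_finrank_ker (f.domRestrict p), range_domRestrict, ker_domRestrict,
    ← map_comap_subtype]
  congr 1
  exact ((ker f).comap p.subtype).equivMapOfInjective _ p.injective_subtype |>.finrank_eq.symm

end Submodule

namespace LinearMap

section

variable {R M N P : Type*} [Ring R] [AddCommGroup M] [Module R M] [AddCommGroup N] [Module R N]
  [AddCommGroup P] [Module R P]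

noncomputable def kerFstCompEquiv (e : M ≃ₗ[R] N × P) :
    ker (fst R N P ∘ₗ (e : M →ₗ[R] N × P)) ≃ₗ[R] P :=
  (e.ofSubmodules _ _ (by
      rw [ker_comp, Submodule.map_comap_eq_of_surjective e.surjective, ker_fst])).trans
    (LinearEquiv.ofInjective (inr R N P) inr_injective).symm

variable (T : M →ₗ[R] N) (U : P →ₗ[R] N)

theorem comap_coprod_range :
    (range T).comap (T.coprod U) = ((range T).comap U).comap (snd R M P) := by
  ext ⟨x, z⟩
  simp [Submodule.add_mem_iff_right _ (mem_range_self T x)]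

theorem map_snd_ker_coprod : (ker (T.coprod U)).map (snd R M P) = (range T).comap U := by
  ext z
  simp only [Submodule.mem_map, mem_ker, coprod_apply, snd_apply, Submodule.mem_comap, mem_range,
    Prod.exists]
  constructor
  · rintro ⟨x, z, h, rfl⟩
    exact ⟨-x, by rw [map_neg, neg_eq_of_add_eq_zero_right h]⟩
  · rintro ⟨x, hx⟩
    exact ⟨-x, z, by rw [map_neg, hx, neg_add_cancel], rfl⟩

theorem ker_coprod_inf_ker_snd :
    ker (T.coprod U) ⊓ ker (snd R M P) = (ker T).map (inl R M P) := by
  rw [ker_snd, inf_comm, ← Submodule.map_comap_eq, ← ker_comp, coprod_inl]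

end

section

variable {K X Y Z : Type*} [DivisionRing K] [AddCommGroup X] [Module K X] [AddCommGroup Y]
  [Module K Y] [AddCommGroup Z] [Module K Z]
  {T : X →ₗ[K] Y} {U : Z →ₗ[K] Y}

variable (U) in
theorem finiteDimensional_ker_of_finiteDimensional_ker_coprod
    [FiniteDimensional K (ker (T.coprod U))] : FiniteDimensional K (ker T) :=
  have : FiniteDimensional K ((ker T).map (inl K X Z)) :=
    Submodule.finiteDimensional_of_le (ker_coprod_inf_ker_snd T U ▸ inf_le_left)
  .equiv ((ker T).equivMapOfInjective (inl K X Z) inl_injective).symm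

theorem finrank_comap_range_add_finrank_ker [FiniteDimensional K (ker (T.coprod U))] :
    finrank K ((range T).comap U) + finrank K (ker T) = finrank K (ker (T.coprod U)) := by
  rw [← Submodule.finrank_map_add_finrank_inf_ker (snd K X Z) (ker (T.coprod U)),
    map_snd_ker_coprod, ker_coprod_inf_ker_snd,
    ((ker T).equivMapOfInjective (inl K X Z) inl_injective).finrank_eq]

theorem surjective_mkQ_comp_of_surjective_coprod (h : Surjective (T.coprod U)) :
    Surjective ((range T).mkQ ∘ₗ U) := by
  rw [← range_eq_top, range_comp, Submodule.map_mkQ_eq_top, ← range_coprod, range_eq_top.mpr h]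

theorem finiteDimensional_quotient_range_of_surjective_coprod [FiniteDimensional K Z]
    (h : Surjective (T.coprod U)) : FiniteDimensional K (Y ⧸ range T) :=
  .of_surjective ((range T).mkQ ∘ₗ U) (surjective_mkQ_comp_of_surjective_coprod h)

theorem finrank_quotient_range_add_finrank_comap [FiniteDimensional K Z]
    (h : Surjective (T.coprod U)) :
    finrank K (Y ⧸ range T) + finrank K ((range T).comap U) = finrank K Z := by
  rw [← finrank_range_add_finrank_ker ((range T).mkQ ∘ₗ U),
    range_eq_top.mpr (surjective_mkQ_comp_of_surjective_coprod h), finrank_top, ker_comp,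
    Submodule.ker_mkQ]

theorem finrank_ker_add_finrank_eq_of_surjective_coprod [FiniteDimensional K Z]
    [FiniteDimensional K (ker (T.coprod U))] (h : Surjective (T.coprod U)) :
    finrank K (ker T) + finrank K Z = finrank K (Y ⧸ range T) + finrank K (ker (T.coprod U)) := by
  rw [← finrank_comap_range_add_finrank_ker, ← finrank_quotient_range_add_finrank_comap h]
  ring

end

end LinearMap

theorem ContinuousLinearMap.isClosed_range_of_surjective_coprod {𝕜 X Y Z : Type*}
    [NontriviallyNormedField 𝕜] [CompleteSpace 𝕜]
    [NormedAddCommGroup X] [NormedSpace 𝕜 X] [CompleteSpace X]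
    [NormedAddCommGroup Y] [NormedSpace 𝕜 Y] [CompleteSpace Y]
    [NormedAddCommGroup Z] [NormedSpace 𝕜 Z] [FiniteDimensional 𝕜 Z]
    (T : X →L[𝕜] Y) (U : Z →L[𝕜] Y) (h : Surjective (T.coprod U)) :
    IsClosed (LinearMap.range (T : X →ₗ[𝕜] Y) : Set Y) := by
  have : CompleteSpace Z := FiniteDimensional.complete 𝕜 Z
  have hpre : T.coprod U ⁻¹' (LinearMap.range (T : X →ₗ[𝕜] Y) : Set Y) =
      Prod.snd ⁻¹' ((LinearMap.range (T : X →ₗ[𝕜] Y)).comap (U : Z →ₗ[𝕜] Y) : Set Z) :=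
    congrArg SetLike.coe (LinearMap.comap_coprod_range (T : X →ₗ[𝕜] Y) (U : Z →ₗ[𝕜] Y))
  rw [← ((T.coprod U).isQuotientMap h).isClosed_preimage, hpre]
  exact (Submodule.closed_of_finiteDimensional _).preimage continuous_snd

/-- **Fredholmness and index from an invertible block extension.**
Let `Φ : X × Z⁺ → Y × Z⁻`, `Φ(x, z⁺) = (T x + T⁺ z⁺, T⁻ x)`, be an invertible continuous
linear block operator between Banach spaces, with `Z⁺` and `Z⁻` finite-dimensional. Then
`T : X → Y` is a Fredholm operator (finite-dimensional kernel and closed,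
finite-codimensional range) and `ind T = dim Z⁻ − dim Z⁺`. -/
theorem fredholm_of_invertible_block_extension
    {X Y Zp Zm : Type*}
    [NormedAddCommGroup X] [NormedSpace ℝ X] [CompleteSpace X]
    [NormedAddCommGroup Y] [NormedSpace ℝ Y] [CompleteSpace Y]
    [NormedAddCommGroup Zp] [NormedSpace ℝ Zp] [FiniteDimensional ℝ Zp]
    [NormedAddCommGroup Zm] [NormedSpace ℝ Zm] [FiniteDimensional ℝ Zm]
    (T : X →L[ℝ] Y) (Tp : Zp →L[ℝ] Y) (Tm : X →L[ℝ] Zm)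
    (Φ : (X × Zp) ≃L[ℝ] (Y × Zm))
    (hΦ : ∀ p : X × Zp, Φ p = (T p.1 + Tp p.2, Tm p.1)) :
    FiniteDimensional ℝ (LinearMap.ker (T : X →ₗ[ℝ] Y)) ∧
    IsClosed (LinearMap.range (T : X →ₗ[ℝ] Y) : Set Y) ∧
    FiniteDimensional ℝ (Y ⧸ LinearMap.range (T : X →ₗ[ℝ] Y)) ∧
    (Module.finrank ℝ (LinearMap.ker (T : X →ₗ[ℝ] Y)) : ℤ) -
        (Module.finrank ℝ (Y ⧸ LinearMap.range (T : X →ₗ[ℝ] Y)) : ℤ) =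
      (Module.finrank ℝ Zm : ℤ) - (Module.finrank ℝ Zp : ℤ) := by
  have hfst : fst ℝ Y Zm ∘ₗ (Φ.toLinearEquiv : X × Zp →ₗ[ℝ] Y × Zm) =
      (T : X →ₗ[ℝ] Y).coprod (Tp : Zp →ₗ[ℝ] Y) :=
    LinearMap.ext fun p => congrArg Prod.fst (hΦ p)
  have hS : Surjective ((T : X →ₗ[ℝ] Y).coprod (Tp : Zp →ₗ[ℝ] Y)) :=
    hfst ▸ (fst_surjective (R := ℝ)).comp Φ.surjective
  have eK : ker ((T : X →ₗ[ℝ] Y).coprod (Tp : Zp →ₗ[ℝ] Y)) ≃ₗ[ℝ] Zm :=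
    hfst ▸ kerFstCompEquiv Φ.toLinearEquiv
  have : FiniteDimensional ℝ (ker ((T : X →ₗ[ℝ] Y).coprod (Tp : Zp →ₗ[ℝ] Y))) := .equiv eK.symm
  refine ⟨finiteDimensional_ker_of_finiteDimensional_ker_coprod (Tp : Zp →ₗ[ℝ] Y),
    T.isClosed_range_of_surjective_coprod Tp hS,
    finiteDimensional_quotient_range_of_surjective_coprod hS, ?_⟩
  have hindex := finrank_ker_add_finrank_eq_of_surjective_coprod hS
  rw [eK.finrank_eq] at hindex
  omega
end
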